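/- arXiv:1311.5729 — 3 statements merged into one kernel-verified Lean document; each statement's English description precedes it below -/
import Mathlib

section
/- For any real h with 0 < |h| < 1/2, the integral ∫₀^{2π} |cos s + 1 + h|^{-1/2} ds is bounded by C · log(1/|h|) for some absolute constant C (i.e., the integral is O(log(1/|h|)) as h → 0). -/
open Real intervalIntegral
open MeasureTheory Set

/-!
Shifting `s = t + π` turns the integrand into `|1 - cos t + h| ^ (-1/2)` on `[-π, π]`. Let
`t₀ = arccos (1 - |h|)`. The bounds `1 - cos x ≥ 2x²/π²` and `sin y ≥ y/π` on `[0, 2π/3]` give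
`|t| * ||t| - t₀| ≤ π² |1 - cos t + h|` for either sign of `h` (for `h < 0` through
`cos t₀ - cos t = 2 sin ((t + t₀)/2) sin ((t - t₀)/2)`), so the integral is at most
`2π ∫₀^π dt / √(t |t - t₀|)`. This kernel has the explicit antiderivatives `arcsin (2t/t₀ - 1)`
on `[0, t₀]` and `2 log (√t + √(t - t₀))` on `[t₀, π]`, whence the bound `π + log (4π / t₀)`;
finally `|h| = 1 - cos t₀ ≤ t₀`.
-/

lemma eqOn_comp_abs_uIcc_zero {α : Type*} {f : ℝ → α} {c : ℝ} (hc : 0 ≤ c) :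
    EqOn (fun x => f |x|) f (uIcc 0 c) := by
  intro x hx
  rw [uIcc_of_le hc] at hx
  simp only [abs_of_nonneg hx.1]

section compAbs

variable {E : Type*} [NormedAddCommGroup E] {f : ℝ → E} {c : ℝ}

theorem IntervalIntegrable.comp_abs (hc : 0 ≤ c) (hf : IntervalIntegrable f volume 0 c) :
    IntervalIntegrable (fun x => f |x|) volume (-c) c := by
  have hpos : IntervalIntegrable (fun x => f |x|) volume 0 c :=
    (intervalIntegrable_congr ((eqOn_comp_abs_uIcc_zero hc).symm.mono uIoc_subset_uIcc)).1 hf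
  have hneg := ((IntervalIntegrable.iff_comp_neg (f := fun x => f |x|)).1 hpos).symm
  simp only [abs_neg, neg_zero] at hneg
  exact hneg.trans hpos

theorem intervalIntegral.integral_comp_abs [NormedSpace ℝ E] (hc : 0 ≤ c)
    (hf : IntervalIntegrable f volume 0 c) :
    ∫ x in -c..c, f |x| = (2 : ℝ) • ∫ x in 0..c, f x := by
  have hpos : ∫ x in 0..c, f |x| = ∫ x in 0..c, f x := integral_congr (eqOn_comp_abs_uIcc_zero hc)
  have hneg : ∫ x in -c..0, f |x| = ∫ x in 0..c, f |x| := by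
    simpa only [abs_neg, neg_zero] using (integral_comp_neg (a := 0) (b := c) fun x => f |x|).symm
  have hint := hf.comp_abs hc
  rw [← integral_add_adjacent_intervals (b := 0) (hint.mono_set ?_) (hint.mono_set ?_), hneg, hpos,
    two_smul]
  all_goals
    rw [uIcc_of_le (by linarith), uIcc_of_le (by linarith)]
    exact Icc_subset_Icc (by linarith) (by linarith)

end compAbs

namespace Real

lemma div_pi_le_sin {y : ℝ} (hy₀ : 0 ≤ y) (hy₁ : y ≤ 2 * π / 3) : y / π ≤ sin y := by
  rcases le_or_gt y (π / 2) with hy | hy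
  · calc y / π ≤ 2 / π * y := by rw [div_mul_eq_mul_div]; gcongr; linarith
      _ ≤ sin y := mul_le_sin hy₀ hy
  · calc y / π ≤ 2 / π * (π - y) := by
          rw [div_mul_eq_mul_div]; gcongr; linarith
      _ ≤ sin (π - y) := mul_le_sin (by linarith) (by linarith)
      _ = sin y := sin_pi_sub y

lemma abs_mul_abs_sub_le_pi_sq_mul {u v : ℝ} (hu : |u| ≤ π) (hv : |v| ≤ π) :
    |u| * |u - v| ≤ π ^ 2 * (1 - cos u + (1 - cos v)) := by
  have hcu := cos_le_one_sub_mul_cos_sq hu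
  have hcv := cos_le_one_sub_mul_cos_sq hv
  have hquad : |u| * |u - v| ≤ 2 * (u ^ 2 + v ^ 2) := by
    have := abs_sub u v
    nlinarith [abs_nonneg u, abs_nonneg v, sq_abs u, sq_abs v, sq_nonneg (|u| - |v|),
      mul_le_mul_of_nonneg_left this (abs_nonneg u)]
  calc |u| * |u - v| ≤ 2 * (u ^ 2 + v ^ 2) := hquad
    _ = π ^ 2 * (2 / π ^ 2 * u ^ 2 + 2 / π ^ 2 * v ^ 2) := by field_simp
    _ ≤ π ^ 2 * (1 - cos u + (1 - cos v)) := by gcongr <;> linarith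

lemma add_mul_abs_sub_le_pi_sq_mul {u v : ℝ} (hu : 0 ≤ u) (hv : 0 ≤ v)
    (hsum : u + v ≤ 4 * π / 3) (hdiff : |u - v| ≤ π) :
    (u + v) * |u - v| ≤ π ^ 2 * |cos u - cos v| := by
  have hsin₁ : (u + v) / 2 / π ≤ sin ((u + v) / 2) := div_pi_le_sin (by positivity) (by linarith)
  have hsin₂ : 2 / π * |(u - v) / 2| ≤ |sin ((u - v) / 2)| :=
    mul_abs_le_abs_sin (by rw [abs_div, abs_two]; linarith)
  have hsin₀ : 0 ≤ sin ((u + v) / 2) := (div_nonneg (by positivity) pi_pos.le).trans hsin₁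
  rw [cos_sub_cos, abs_mul, abs_mul, abs_neg, abs_two, abs_of_nonneg hsin₀]
  calc (u + v) * |u - v| = π ^ 2 * (2 * ((u + v) / 2 / π) * (2 / π * |(u - v) / 2|)) := by
        rw [abs_div, abs_two]; field_simp
    _ ≤ π ^ 2 * (2 * sin ((u + v) / 2) * |sin ((u - v) / 2)|) := by gcongr

end Real

noncomputable def pendulumKernel (t₀ t : ℝ) : ℝ := (√t * √|t - t₀|)⁻¹

lemma hasDerivAt_arcsin_pendulumKernel {t₀ t : ℝ} (ht : 0 < t) (ht' : t < t₀) :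
    HasDerivAt (fun x => arcsin (2 * x / t₀ - 1)) (pendulumKernel t₀ t) t := by
  have ht₀ : 0 < t₀ := ht.trans ht'
  have h₁ : 0 < √t := sqrt_pos.2 ht
  have h₂ : 0 < √(t₀ - t) := sqrt_pos.2 (by linarith)
  have hy : 1 - (2 * t / t₀ - 1) ^ 2 = (2 * (√t * √(t₀ - t)) / t₀) ^ 2 := by
    rw [div_pow, mul_pow, mul_pow, sq_sqrt ht.le, sq_sqrt (by linarith)]
    field_simp; ring
  have hne₁ : 2 * t / t₀ - 1 ≠ -1 := by
    rw [Ne, sub_eq_neg_self]; positivity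
  have hne₂ : 2 * t / t₀ - 1 ≠ 1 := by
    rw [Ne, sub_eq_iff_eq_add, div_eq_iff ht₀.ne']; intro h; linarith
  refine ((hasDerivAt_arcsin hne₁ hne₂).comp t
    ((((hasDerivAt_id t).const_mul 2).div_const t₀).sub_const 1)).congr_deriv ?_
  rw [pendulumKernel, abs_of_neg (by linarith : t - t₀ < 0), neg_sub, hy,
    sqrt_sq (by positivity)]
  field_simp

lemma hasDerivAt_log_pendulumKernel {t₀ t : ℝ} (ht₀ : 0 ≤ t₀) (ht : t₀ < t) :
    HasDerivAt (fun x => 2 * log (√x + √(x - t₀))) (pendulumKernel t₀ t) t := by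
  have h₁ : 0 < √t := sqrt_pos.2 (by linarith)
  have h₂ : 0 < √(t - t₀) := sqrt_pos.2 (by linarith)
  have hs₁ : HasDerivAt (fun x => √x) (1 / (2 * √t)) t := hasDerivAt_sqrt (by linarith)
  have hs₂ : HasDerivAt (fun x => √(x - t₀)) (1 / (2 * √(t - t₀))) t := by
    simpa using ((hasDerivAt_id t).sub_const t₀).sqrt (by simp; linarith)
  have hs : HasDerivAt (fun x => √x + √(x - t₀)) (1 / (2 * √t) + 1 / (2 * √(t - t₀))) t :=
    hs₁.add hs₂
  refine ((hs.log (by positivity)).const_mul 2).congr_deriv ?_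
  rw [pendulumKernel, abs_of_pos (by linarith : 0 < t - t₀)]
  field_simp
  ring

lemma pendulumKernel_nonneg (t₀ t : ℝ) : 0 ≤ pendulumKernel t₀ t := by
  unfold pendulumKernel; positivity

section pendulumKernel

variable {t₀ b : ℝ}

lemma continuousOn_log_sqrt_add_sqrt (ht₀ : 0 < t₀) :
    ContinuousOn (fun x => 2 * log (√x + √(x - t₀))) (Ici t₀) := by
  refine continuousOn_const.mul (ContinuousOn.log (by fun_prop) fun x hx => ?_)
  have : 0 < √x := sqrt_pos.2 (ht₀.trans_le hx)
  positivity

lemma intervalIntegrable_pendulumKernel_zero_left (ht₀ : 0 < t₀) :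
    IntervalIntegrable (pendulumKernel t₀) volume 0 t₀ :=
  (intervalIntegrable_iff_integrableOn_Ioc_of_le ht₀.le).2 <|
    integrableOn_deriv_of_nonneg (by fun_prop)
      (fun _ ht => hasDerivAt_arcsin_pendulumKernel ht.1 ht.2) fun _ _ => pendulumKernel_nonneg _ _

lemma intervalIntegrable_pendulumKernel_right (ht₀ : 0 < t₀) (hb : t₀ ≤ b) :
    IntervalIntegrable (pendulumKernel t₀) volume t₀ b :=
  (intervalIntegrable_iff_integrableOn_Ioc_of_le hb).2 <|
    integrableOn_deriv_of_nonneg ((continuousOn_log_sqrt_add_sqrt ht₀).mono Icc_subset_Ici_self)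
      (fun _ ht => hasDerivAt_log_pendulumKernel ht₀.le ht.1) fun _ _ => pendulumKernel_nonneg _ _

lemma intervalIntegrable_pendulumKernel (ht₀ : 0 < t₀) (hb : t₀ ≤ b) :
    IntervalIntegrable (pendulumKernel t₀) volume 0 b :=
  (intervalIntegrable_pendulumKernel_zero_left ht₀).trans
    (intervalIntegrable_pendulumKernel_right ht₀ hb)

lemma integral_pendulumKernel (ht₀ : 0 < t₀) (hb : t₀ ≤ b) :
    ∫ t in 0..b, pendulumKernel t₀ t = π + 2 * log (√b + √(b - t₀)) - log t₀ := by
  rw [← integral_add_adjacent_intervals (intervalIntegrable_pendulumKernel_zero_left ht₀)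
      (intervalIntegrable_pendulumKernel_right ht₀ hb),
    integral_eq_sub_of_hasDerivAt_of_le ht₀.le (by fun_prop)
      (fun _ ht => hasDerivAt_arcsin_pendulumKernel ht.1 ht.2)
      (intervalIntegrable_pendulumKernel_zero_left ht₀),
    integral_eq_sub_of_hasDerivAt_of_le hb
      ((continuousOn_log_sqrt_add_sqrt ht₀).mono Icc_subset_Ici_self)
      (fun _ ht => hasDerivAt_log_pendulumKernel ht₀.le ht.1)
      (intervalIntegrable_pendulumKernel_right ht₀ hb)]
  rw [mul_div_cancel_right₀ _ ht₀.ne', sub_self, sqrt_zero, add_zero, log_sqrt ht₀.le]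
  norm_num [arcsin_one, arcsin_neg_one]
  ring

lemma integral_pendulumKernel_le (ht₀ : 0 < t₀) (hb : t₀ ≤ b) :
    ∫ t in 0..b, pendulumKernel t₀ t ≤ π + log (4 * b) - log t₀ := by
  have hsqrt : 0 < √b := sqrt_pos.2 (ht₀.trans_le hb)
  have hlog : 2 * log (√b + √(b - t₀)) ≤ log (4 * b) := by
    calc 2 * log (√b + √(b - t₀)) ≤ 2 * log (2 * √b) := by
          gcongr; linarith [sqrt_le_sqrt (by linarith : b - t₀ ≤ b)]
      _ = log ((2 * √b) ^ 2) := by rw [log_pow]; norm_num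
      _ = log (4 * b) := by rw [mul_pow, sq_sqrt (by linarith)]; norm_num
  rw [integral_pendulumKernel ht₀ hb]
  linarith

end pendulumKernel

lemma abs_mul_abs_sub_le_pi_sq_mul_abs_one_sub_cos_add {t₀ h t : ℝ} (ht₀ : 0 ≤ t₀)
    (ht₀' : t₀ ≤ π / 3) (hh : |h| = 1 - cos t₀) (ht : |t| ≤ π) :
    |t| * |(|t| - t₀)| ≤ π ^ 2 * |1 - cos t + h| := by
  rw [← cos_abs t]
  rcases le_or_gt 0 h with hsgn | hsgn
  · rw [abs_of_nonneg hsgn] at hh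
    have hnonneg : 0 ≤ 1 - cos |t| + (1 - cos t₀) := by
      linarith [cos_le_one |t|, cos_le_one t₀]
    rw [hh, abs_of_nonneg hnonneg]
    have hbound := abs_mul_abs_sub_le_pi_sq_mul (u := |t|) (by rwa [abs_abs])
      (by rw [abs_of_nonneg ht₀]; linarith)
    rwa [abs_abs] at hbound
  · rw [abs_of_neg hsgn] at hh
    have hbound := add_mul_abs_sub_le_pi_sq_mul (abs_nonneg t) ht₀ (by linarith)
      (abs_le.2 ⟨by linarith [abs_nonneg t], by linarith⟩)
    calc |t| * |(|t| - t₀)| ≤ (|t| + t₀) * |(|t| - t₀)| := by gcongr; linarith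
      _ ≤ π ^ 2 * |cos |t| - cos t₀| := hbound
      _ = π ^ 2 * |1 - cos |t| + h| := by rw [abs_sub_comm]; congr 2; linarith

lemma rpow_neg_half_le_pi_mul_pendulumKernel {t₀ h t : ℝ} (ht₀ : 0 ≤ t₀)
    (ht₀' : t₀ ≤ π / 3) (hh : |h| = 1 - cos t₀) (ht : |t| ≤ π) (ht0 : t ≠ 0) (htt₀ : |t| ≠ t₀) :
    |1 - cos t + h| ^ (-(1 : ℝ) / 2) ≤ π * pendulumKernel t₀ |t| := by
  set p := |t| * |(|t| - t₀)|
  have hp : 0 < p := mul_pos (abs_pos.2 ht0) (abs_pos.2 (sub_ne_zero.2 htt₀))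
  have hpX := abs_mul_abs_sub_le_pi_sq_mul_abs_one_sub_cos_add ht₀ ht₀' hh ht
  have hsqrt : √p / π ≤ √|1 - cos t + h| := by
    rw [div_le_iff₀ pi_pos, ← sqrt_sq pi_pos.le, ← sqrt_mul (abs_nonneg _), mul_comm]
    exact sqrt_le_sqrt hpX
  calc |1 - cos t + h| ^ (-(1 : ℝ) / 2) = (√|1 - cos t + h|)⁻¹ := by
        rw [sqrt_eq_rpow, ← rpow_neg (abs_nonneg _), neg_div]
    _ ≤ (√p / π)⁻¹ := inv_anti₀ (by positivity) hsqrt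
    _ = π * pendulumKernel t₀ |t| := by
        rw [pendulumKernel, inv_div, ← sqrt_mul (abs_nonneg _), div_eq_mul_inv]

lemma integral_pendulum_le_integral_pendulumKernel {t₀ h : ℝ} (ht₀ : 0 < t₀)
    (ht₀' : t₀ ≤ π / 3) (hh : |h| = 1 - cos t₀) :
    ∫ s in (0 : ℝ)..(2 * π), |cos s + 1 + h| ^ (-(1 : ℝ) / 2) ≤
      2 * π * ∫ t in 0..π, pendulumKernel t₀ t := by
  have hK : IntervalIntegrable (fun t => pendulumKernel t₀ t) volume 0 π :=
    intervalIntegrable_pendulumKernel ht₀ (by linarith [pi_pos])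
  have hG : IntervalIntegrable (fun s => π * pendulumKernel t₀ |s - π|) volume 0 (2 * π) := by
    have := ((hK.comp_abs pi_pos.le).comp_sub_right π).const_mul π
    rwa [neg_add_cancel, ← two_mul] at this
  have hGint : ∫ s in (0 : ℝ)..(2 * π), π * pendulumKernel t₀ |s - π| =
      2 * π * ∫ t in 0..π, pendulumKernel t₀ t := by
    rw [intervalIntegral.integral_const_mul,
      integral_comp_sub_right (fun t => pendulumKernel t₀ |t|), zero_sub, two_mul,
      add_sub_cancel_right, intervalIntegral.integral_comp_abs pi_pos.le hK, smul_eq_mul]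
    ring
  have hsingular : ∀ᵐ s ∂volume, s ∉ ({π, π - t₀, π + t₀} : Set ℝ) :=
    measure_eq_zero_iff_ae_notMem.1 ((toFinite _).measure_zero volume)
  have hle : ∀ᵐ s ∂volume.restrict (Ioc 0 (2 * π)),
      |cos s + 1 + h| ^ (-(1 : ℝ) / 2) ≤ π * pendulumKernel t₀ |s - π| := by
    filter_upwards [ae_restrict_mem measurableSet_Ioc, ae_restrict_of_ae hsingular]
      with s ⟨hs₀, hs₁⟩ hs
    simp only [mem_insert_iff, mem_singleton_iff, not_or] at hs
    have hcos : cos s + 1 + h = 1 - cos (s - π) + h := by rw [cos_sub_pi]; ring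
    rw [hcos]
    refine rpow_neg_half_le_pi_mul_pendulumKernel ht₀.le ht₀' hh
      (abs_le.2 ⟨by linarith, by linarith⟩) (sub_ne_zero.2 hs.1) fun habs => ?_
    rcases abs_eq ht₀.le |>.1 habs with h' | h'
    · exact hs.2.2 (by linarith)
    · exact hs.2.1 (by linarith)
  rw [← hGint, integral_of_le (by positivity), integral_of_le (by positivity)]
  exact integral_mono_of_nonneg (ae_of_all _ fun _ => rpow_nonneg (abs_nonneg _) _) hG.1 hle

/-- Logarithmic estimate for the pendulum period integral near the separatrix:
for `0 < |h| < 1/2`, `∫₀^{2π} |cos s + 1 + h|^{-1/2} ds ≤ C·log(1/|h|)`. -/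
theorem pendulum_period_log_estimate :
    ∃ C : ℝ, 0 < C ∧ ∀ h : ℝ, 0 < |h| → |h| < 1 / 2 →
      (∫ s in (0:ℝ)..(2 * π), |Real.cos s + 1 + h| ^ (-(1:ℝ)/2))
        ≤ C * Real.log (1 / |h|) := by
  refine ⟨20 * π, by positivity, fun h hh₀ hh₁ => ?_⟩
  set t₀ := arccos (1 - |h|)
  have hcos : cos t₀ = 1 - |h| := cos_arccos (by linarith) (by linarith)
  have ht₀ : 0 < t₀ := arccos_pos.2 (by linarith)
  have ht₀' : t₀ ≤ π / 3 := by
    calc t₀ ≤ arccos (cos (π / 3)) := arccos_le_arccos (by rw [cos_pi_div_three]; linarith)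
      _ = π / 3 := arccos_cos (by positivity) (by linarith [pi_pos])
  -- `1 - cos t₀ ≤ t₀ ^ 2 / 2 ≤ t₀` since `t₀ ≤ 2`
  have hht₀ : |h| ≤ t₀ := by
    nlinarith [one_sub_sq_div_two_le_cos (x := t₀), pi_lt_d2]
  have hlog_two : log 2 ≤ log (1 / |h|) := log_le_log two_pos (by rw [le_div_iff₀ hh₀]; linarith)
  have hlog_t₀ : -log t₀ ≤ log (1 / |h|) := by
    rw [one_div, log_inv, neg_le_neg_iff]; exact log_le_log hh₀ hht₀
  have hlog_four_pi : log (4 * π) ≤ 4 * log 2 := by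
    rw [← log_rpow two_pos]; exact log_le_log (by positivity) (by norm_num; linarith [pi_lt_d2])
  calc ∫ s in (0:ℝ)..(2 * π), |cos s + 1 + h| ^ (-(1:ℝ)/2)
      ≤ 2 * π * ∫ t in 0..π, pendulumKernel t₀ t :=
        integral_pendulum_le_integral_pendulumKernel ht₀ ht₀' (by rw [hcos]; ring)
    _ ≤ 2 * π * (π + log (4 * π) - log t₀) := by
        gcongr; exact integral_pendulumKernel_le ht₀ (by linarith [pi_pos])
    _ ≤ 2 * π * (10 * log (1 / |h|)) := by gcongr; linarith [pi_lt_d2, log_two_gt_d9]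
    _ = 20 * π * log (1 / |h|) := by ring
end

section
/- For any α ∈ ℝ, the function φ(T) = ∫₀^T |cos(t − α)| dt − (2/π) T is π-periodic in T and satisfies |φ(T)| ≤ 2 Φ₀ for all T ≥ 0, where Φ₀ = √(1 − 4/π²) − (2/π) arccos(2/π). -/
/-! Subtracting its mean `2/π` from `|cos (t - α)|` leaves a `π`-periodic function `g` of mean
zero, so the error `φ(T) = ∫₀ᵀ g` is `π`-periodic and it suffices to bound it for `T ∈ [0, π]`.
There, `φ(T) ≤ ∫₀ᵀ g⁺` and `-φ(T) = ∫_T^π g ≤ ∫_T^π g⁺`, so `|φ(T)| ≤ ∫₀^π g⁺`. Over the window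
`[-π/2, π/2]` the positive part lives on `[-θ, θ]` with `cos θ = 2/π`, where it integrates to
`2 (sin θ - θ cos θ) = 2Φ₀`. -/

open Real intervalIntegral Function MeasureTheory Set

theorem abs_intervalIntegral_le_integral_max_zero {g : ℝ → ℝ} {a b r : ℝ} (hr : r ∈ Icc a b)
    (hg : IntervalIntegrable g volume a b) (hmean : ∫ t in a..b, g t = 0) :
    |∫ t in a..r, g t| ≤ ∫ t in a..b, max (g t) 0 := by
  have hg_pos : IntervalIntegrable (fun t => max (g t) 0) volume a b :=
    ⟨hg.1.pos_part, hg.2.pos_part⟩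
  have hsub : ∀ {f : ℝ → ℝ} {c d}, IntervalIntegrable f volume a b → c ∈ Icc a b →
      d ∈ Icc a b → IntervalIntegrable f volume c d :=
    fun hf hc hd => hf.mono_set (uIcc_subset_uIcc (Icc_subset_uIcc hc) (Icc_subset_uIcc hd))
  have hle : ∀ {c d}, a ≤ c → c ≤ d → d ≤ b → ∫ t in c..d, g t ≤ ∫ t in a..b, max (g t) 0 :=
    fun hac hcd hdb =>
      have hc : _ ∈ Icc a b := ⟨hac, hcd.trans hdb⟩
      have hd : _ ∈ Icc a b := ⟨hac.trans hcd, hdb⟩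
      (integral_mono_on hcd (hsub hg hc hd) (hsub hg_pos hc hd) fun t _ => le_max_left _ _).trans
        (integral_mono_interval hac hcd hdb (ae_of_all _ fun t => le_max_right _ _) hg_pos)
  have hsplit := integral_add_adjacent_intervals (hsub hg ⟨le_rfl, hr.1.trans hr.2⟩ hr)
    (hsub hg hr ⟨hr.1.trans hr.2, le_rfl⟩)
  rw [abs_le]
  constructor
  · linarith [hle hr.1 hr.2 le_rfl]
  · exact hle le_rfl hr.1 hr.2

namespace Function.Periodic

variable {g : ℝ → ℝ} {p : ℝ}

theorem periodic_primitive_of_integral_eq_zero (hg : Periodic g p)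
    (h_int : ∀ a b, IntervalIntegrable g volume a b) (hmean : ∫ t in (0 : ℝ)..p, g t = 0) :
    Periodic (fun T => ∫ t in (0 : ℝ)..T, g t) p := fun T => by
  simpa [hmean] using hg.intervalIntegral_add_eq_add 0 T h_int

theorem abs_primitive_le_integral_max_zero (hg : Periodic g p) (hp : 0 < p)
    (h_int : IntervalIntegrable g volume 0 p) (hmean : ∫ t in (0 : ℝ)..p, g t = 0) (T : ℝ) :
    |∫ t in (0 : ℝ)..T, g t| ≤ ∫ t in (0 : ℝ)..p, max (g t) 0 := by
  obtain ⟨r, hr, hTr⟩ := (hg.periodic_primitive_of_integral_eq_zero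
    (hg.intervalIntegrable₀ hp.ne' h_int) hmean).exists_mem_Ico₀ hp T
  rw [hTr]
  exact abs_intervalIntegral_le_integral_max_zero (Ico_subset_Icc_self hr) h_int hmean

theorem intervalIntegral_comp_sub_eq {f : ℝ → ℝ} (hf : Periodic f p) (α a b : ℝ) :
    ∫ t in a..a + p, f (t - α) = ∫ t in b..b + p, f t := by
  rw [integral_comp_sub_right, add_sub_right_comm, hf.intervalIntegral_add_eq]

end Function.Periodic

theorem abs_cos_periodic : Periodic (fun t => |cos t|) π := fun t => by
  simp [cos_add_pi]

theorem integral_abs_cos_neg_pi_div_two_pi_div_two : ∫ t in -(π / 2)..π / 2, |cos t| = 2 := by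
  rw [integral_congr (g := cos) fun t ht => abs_of_nonneg <| cos_nonneg_of_mem_Icc <| by
    rwa [uIcc_of_le (by linarith [pi_pos])] at ht]
  simp [integral_cos]
  norm_num

theorem integral_max_abs_cos_sub_cos {θ : ℝ} (hθ : θ ∈ Icc 0 (π / 2)) :
    ∫ t in -(π / 2)..π / 2, max (|cos t| - cos θ) 0 = 2 * (sin θ - θ * cos θ) := by
  obtain ⟨hθ0, hθπ⟩ := hθ
  have hπ := pi_pos
  have hcos_abs : ∀ {t}, |t| ≤ π / 2 → |cos t| = cos t := fun ht =>
    abs_of_nonneg (cos_nonneg_of_mem_Icc (abs_le.1 ht))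
  have hzero : ∀ {t}, |t| ≤ π / 2 → θ ≤ |t| → max (|cos t| - cos θ) 0 = 0 := fun {t} ht hθt => by
    have : cos |t| ≤ cos θ := cos_le_cos_of_nonneg_of_le_pi hθ0 (by linarith) hθt
    rw [hcos_abs ht, ← cos_abs t]
    exact max_eq_right (by linarith)
  have hmid : ∀ {t}, |t| ≤ θ → max (|cos t| - cos θ) 0 = cos t - cos θ := fun {t} ht => by
    have : cos θ ≤ cos |t| := cos_le_cos_of_nonneg_of_le_pi (abs_nonneg t) (by linarith) ht
    rw [hcos_abs (ht.trans hθπ), ← cos_abs t]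
    exact max_eq_left (by linarith)
  have h_int : ∀ a b, IntervalIntegrable (fun t => max (|cos t| - cos θ) 0) volume a b :=
    fun a b => Continuous.intervalIntegrable (by fun_prop) a b
  have hleft : ∫ t in -(π / 2)..-θ, max (|cos t| - cos θ) 0 = 0 := by
    refine (integral_congr (g := fun _ => 0) fun t ht => ?_).trans integral_zero
    rw [uIcc_of_le (by linarith)] at ht
    exact hzero (abs_le.2 ⟨ht.1, by linarith [ht.2]⟩) (le_abs.2 (Or.inr (by linarith [ht.2])))
  have hright : ∫ t in θ..π / 2, max (|cos t| - cos θ) 0 = 0 := by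
    refine (integral_congr (g := fun _ => 0) fun t ht => ?_).trans integral_zero
    rw [uIcc_of_le hθπ] at ht
    exact hzero (abs_le.2 ⟨by linarith [ht.1], ht.2⟩) (le_abs.2 (Or.inl ht.1))
  have hcenter : ∫ t in -θ..θ, max (|cos t| - cos θ) 0 = ∫ t in -θ..θ, (cos t - cos θ) := by
    refine integral_congr fun t ht => ?_
    rw [uIcc_of_le (by linarith)] at ht
    exact hmid (abs_le.2 ht)
  rw [← integral_add_adjacent_intervals (h_int _ (-θ)) (h_int _ _),
    ← integral_add_adjacent_intervals (h_int (-θ) θ) (h_int _ _), hleft, hright, hcenter,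
    integral_sub (continuous_cos.intervalIntegrable _ _) intervalIntegrable_const, integral_cos,
    intervalIntegral.integral_const, sin_neg, smul_eq_mul]
  ring

theorem integral_max_abs_cos_sub {c : ℝ} (hc : c ∈ Icc 0 1) :
    ∫ t in -(π / 2)..π / 2, max (|cos t| - c) 0 = 2 * (√(1 - c ^ 2) - c * arccos c) := by
  have hθ : arccos c ∈ Icc 0 (π / 2) := ⟨arccos_nonneg c, arccos_le_pi_div_two.2 hc.1⟩
  have hcos : cos (arccos c) = c := cos_arccos (by linarith [hc.1]) hc.2
  rw [← sin_arccos, ← hcos, integral_max_abs_cos_sub_cos hθ, hcos, mul_comm (arccos c)]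

theorem integral_abs_cos_sub_period (α a : ℝ) : ∫ t in a..a + π, |cos (t - α)| = 2 := by
  rw [abs_cos_periodic.intervalIntegral_comp_sub_eq α a (-(π / 2)),
    show -(π / 2) + π = π / 2 by ring, integral_abs_cos_neg_pi_div_two_pi_div_two]

theorem integral_max_abs_cos_sub_period (α a : ℝ) {c : ℝ} (hc : c ∈ Icc 0 1) :
    ∫ t in a..a + π, max (|cos (t - α)| - c) 0 = 2 * (√(1 - c ^ 2) - c * arccos c) := by
  have hper : Periodic (fun t => max (|cos t| - c) 0) π :=
    abs_cos_periodic.comp fun x => max (x - c) 0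
  rw [hper.intervalIntegral_comp_sub_eq α a (-(π / 2)), show -(π / 2) + π = π / 2 by ring,
    integral_max_abs_cos_sub hc]

/-- For any shift `α`, the function `φ(T) = ∫₀^T |cos(t − α)| dt − (2/π)T` is `π`-periodic
and bounded by `2Φ₀` with `Φ₀ = √(1 − 4/π²) − (2/π)·arccos(2/π)`. -/
theorem periodic_error_bound (α : ℝ) :
    (∀ T : ℝ, (∫ t in (0:ℝ)..(T + π), |Real.cos (t - α)|) - (2 / π) * (T + π)
        = (∫ t in (0:ℝ)..T, |Real.cos (t - α)|) - (2 / π) * T) ∧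
    (∀ T : ℝ, 0 ≤ T →
      |(∫ t in (0:ℝ)..T, |Real.cos (t - α)|) - (2 / π) * T|
        ≤ 2 * (Real.sqrt (1 - 4 / π ^ 2) - (2 / π) * Real.arccos (2 / π))) := by
  have hcont : Continuous fun t => |cos (t - α)| := by fun_prop
  have hg : Periodic (fun t => |cos (t - α)| - 2 / π) π :=
    (abs_cos_periodic.sub_const α).comp (· - 2 / π)
  have h_int : ∀ a b, IntervalIntegrable (fun t => |cos (t - α)| - 2 / π) volume a b :=
    fun a b => (hcont.sub continuous_const).intervalIntegrable a b
  have herr : ∀ T, (∫ t in (0 : ℝ)..T, |cos (t - α)|) - 2 / π * T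
      = ∫ t in (0 : ℝ)..T, (|cos (t - α)| - 2 / π) := fun T => by
    rw [integral_sub (hcont.intervalIntegrable 0 T) intervalIntegrable_const,
      intervalIntegral.integral_const, smul_eq_mul, sub_zero, mul_comm]
  have hmean : ∫ t in (0 : ℝ)..π, (|cos (t - α)| - 2 / π) = 0 := by
    rw [← herr, ← zero_add π, integral_abs_cos_sub_period, zero_add]
    field_simp
    ring
  have hpos : ∫ t in (0 : ℝ)..π, max (|cos (t - α)| - 2 / π) 0
      = 2 * (√(1 - 4 / π ^ 2) - 2 / π * arccos (2 / π)) := by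
    have hc : 2 / π ∈ Icc 0 1 :=
      ⟨by positivity, (div_le_one pi_pos).2 (by linarith [pi_gt_three])⟩
    have h := integral_max_abs_cos_sub_period α 0 hc
    rwa [zero_add, div_pow, show (2 : ℝ) ^ 2 = 4 by norm_num] at h
  refine ⟨fun T => ?_, fun T _ => ?_⟩
  · rw [herr, herr]
    exact hg.periodic_primitive_of_integral_eq_zero h_int hmean T
  · rw [herr, ← hpos]
    exact hg.abs_primitive_le_integral_max_zero pi_pos (h_int 0 π) hmean T
end

section
/- Consider a trajectory of ẋ = y, ẏ = −sin x + ε u(t) with |u(t)| ≤ 1 along with adjoint variables satisfying φ' = (cos x) ψ, ψ' = −φ, and the identity y φ + (−sin x + ε u) ψ − 1 ≡ 0. If t₁ < t₂ are consecutive simple zeros of ψ, then y(t₁) · y(t₂) < 0. -/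
/-!
At a zero of `ψ` the Hamiltonian identity reduces to `y φ = 1`, so `y` has the sign of `φ = -ψ'`
there. Between consecutive zeros `ψ` keeps one sign, so `ψ'` cannot have the same strict sign
at both ends.
-/

open Real Set Filter Topology

theorem IsPreconnected.forall_pos_or_forall_neg {X α : Type*} [TopologicalSpace X]
    [LinearOrder α] [Zero α] [TopologicalSpace α] [OrderClosedTopology α]
    {s : Set X} {f : X → α} (hs : IsPreconnected s) (hf : ContinuousOn f s)
    (hne : ∀ x ∈ s, f x ≠ 0) : (∀ x ∈ s, 0 < f x) ∨ (∀ x ∈ s, f x < 0) := by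
  by_contra! h
  obtain ⟨⟨a, ha, hfa⟩, ⟨b, hb, hfb⟩⟩ := h
  obtain ⟨c, hc, hfc⟩ := hs.intermediate_value ha hb hf ⟨hfa, hfb⟩
  exact hne c hc hfc

theorem HasDerivAt.nonneg_of_eventually_le_right {f : ℝ → ℝ} {f' a : ℝ}
    (hf : HasDerivAt f f' a) (h : ∀ᶠ t in 𝓝[>] a, f a ≤ f t) : 0 ≤ f' := by
  refine ge_of_tendsto
    ((hasDerivWithinAt_iff_tendsto_slope' (s := Ioi a) (lt_irrefl a)).1 hf.hasDerivWithinAt) ?_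
  filter_upwards [h, self_mem_nhdsWithin] with t hft (hat : a < t)
  rw [slope_def_field]
  exact div_nonneg (sub_nonneg.2 hft) (sub_nonneg.2 hat.le)

theorem HasDerivAt.nonpos_of_eventually_le_left {f : ℝ → ℝ} {f' b : ℝ}
    (hf : HasDerivAt f f' b) (h : ∀ᶠ t in 𝓝[<] b, f b ≤ f t) : f' ≤ 0 := by
  refine le_of_tendsto
    ((hasDerivWithinAt_iff_tendsto_slope' (s := Iio b) (lt_irrefl b)).1 hf.hasDerivWithinAt) ?_
  filter_upwards [h, self_mem_nhdsWithin] with t hft (htb : t < b)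
  rw [slope_def_field]
  exact div_nonpos_of_nonneg_of_nonpos (sub_nonneg.2 hft) (sub_nonpos.2 htb.le)

theorem mul_nonpos_of_hasDerivAt_of_pos_between_zeros {f : ℝ → ℝ} {f₁' f₂' a b : ℝ}
    (hab : a < b) (h₁ : HasDerivAt f f₁' a) (h₂ : HasDerivAt f f₂' b)
    (ha : f a = 0) (hb : f b = 0) (hpos : ∀ t ∈ Ioo a b, 0 < f t) : f₁' * f₂' ≤ 0 := by
  have hf₁ : 0 ≤ f₁' := h₁.nonneg_of_eventually_le_right <| by
    filter_upwards [Ioo_mem_nhdsGT hab] with t ht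
    exact ha ▸ (hpos t ht).le
  have hf₂ : f₂' ≤ 0 := h₂.nonpos_of_eventually_le_left <| by
    filter_upwards [Ioo_mem_nhdsLT hab] with t ht
    exact hb ▸ (hpos t ht).le
  exact mul_nonpos_of_nonneg_of_nonpos hf₁ hf₂

theorem mul_nonpos_of_hasDerivAt_of_consecutive_zeros {f : ℝ → ℝ} {f₁' f₂' a b : ℝ}
    (hab : a < b) (hf : ContinuousOn f (Ioo a b)) (h₁ : HasDerivAt f f₁' a)
    (h₂ : HasDerivAt f f₂' b) (ha : f a = 0) (hb : f b = 0)
    (hne : ∀ t ∈ Ioo a b, f t ≠ 0) : f₁' * f₂' ≤ 0 := by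
  rcases isPreconnected_Ioo.forall_pos_or_forall_neg hf hne with hpos | hneg
  · exact mul_nonpos_of_hasDerivAt_of_pos_between_zeros hab h₁ h₂ ha hb hpos
  · simpa using mul_nonpos_of_hasDerivAt_of_pos_between_zeros hab h₁.neg h₂.neg
      (by simp [ha]) (by simp [hb]) fun t ht ↦ neg_pos.2 (hneg t ht)

theorem basic_lemma_general (ε : ℝ) (x y φ ψ u : ℝ → ℝ)
    (hψ : ∀ t, HasDerivAt ψ (-(φ t)) t)
    (hH : ∀ t, y t * φ t + (-Real.sin (x t) + ε * u t) * ψ t - 1 = 0)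
    (t₁ t₂ : ℝ) (hlt : t₁ < t₂)
    (hz₁ : ψ t₁ = 0) (hz₂ : ψ t₂ = 0)
    (hconsec : ∀ t ∈ Set.Ioo t₁ t₂, ψ t ≠ 0) :
    y t₁ * y t₂ < 0 := by
  have hφ : φ t₁ * φ t₂ ≤ 0 := by
    simpa using mul_nonpos_of_hasDerivAt_of_consecutive_zeros hlt
      (fun t _ ↦ (hψ t).continuousAt.continuousWithinAt) (hψ t₁) (hψ t₂) hz₁ hz₂ hconsec
  have hyφ₁ : y t₁ * φ t₁ = 1 := by simpa [hz₁, sub_eq_zero] using hH t₁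
  have hyφ₂ : y t₂ * φ t₂ = 1 := by simpa [hz₂, sub_eq_zero] using hH t₂
  have hprod : 0 < y t₁ * y t₂ * (φ t₁ * φ t₂) := by
    rw [mul_mul_mul_comm, hyφ₁, hyφ₂, mul_one]; exact one_pos
  exact neg_of_mul_pos_left hprod hφ

/-- Basic Lemma: along an extremal of the minimum-time pendulum problem, the velocities at
two consecutive simple zeros of the adjoint variable `ψ` have opposite signs. -/
theorem basic_lemma (ε : ℝ) (x y φ ψ u : ℝ → ℝ)
    (hu : ∀ t, |u t| ≤ 1)
    (hx : ∀ t, HasDerivAt x (y t) t)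
    (hy : ∀ t, HasDerivAt y (-Real.sin (x t) + ε * u t) t)
    (hφ : ∀ t, HasDerivAt φ (Real.cos (x t) * ψ t) t)
    (hψ : ∀ t, HasDerivAt ψ (-(φ t)) t)
    (hH : ∀ t, y t * φ t + (-Real.sin (x t) + ε * u t) * ψ t - 1 = 0)
    (t₁ t₂ : ℝ) (hlt : t₁ < t₂)
    (hz₁ : ψ t₁ = 0) (hz₂ : ψ t₂ = 0)
    (hs₁ : deriv ψ t₁ ≠ 0) (hs₂ : deriv ψ t₂ ≠ 0)
    (hconsec : ∀ t ∈ Set.Ioo t₁ t₂, ψ t ≠ 0) :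
    y t₁ * y t₂ < 0 :=
  basic_lemma_general ε x y φ ψ u hψ hH t₁ t₂ hlt hz₁ hz₂ hconsec
end
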